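/- Let V : (0,∞) → ℝ be given by V(t) = c·t^{λ-1}·(-log t)^{m-1} for constants c > 0, λ > 0 and integer m ≥ 1. Then its Laplace transform Z(n) = ∫₀^1 exp(-n t) V(t) dt satisfies Z(n)·n^λ/(log n)^{m-1} → c·Γ(λ) as n → ∞. -/

import Mathlib

open Real MeasureTheory Filter Set Topology

/-! After factoring out `c` and writing `k = m - 1`, the substitution `s = n t` turns
`Z(n) n^l / (log n)^k` into `∫₀ⁿ e^(-s) s^(l-1) (1 - log s / log n)^k ds`. Pointwise the last
factor tends to `1`, and once `log n ≥ 1` it is bounded by `(1 + |log s|)^k ≤ C (s^δ + s^(-δ))`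
for any `0 < δ < l`, so dominated convergence gives the limit `∫₀^∞ e^(-s) s^(l-1) ds = Γ(l)`. -/

lemma one_add_log_pow_le {ε x : ℝ} (hε : 0 < ε) (hx : 1 ≤ x) (k : ℕ) :
    (1 + log x) ^ k ≤ (1 + 1 / ε) ^ k * x ^ (ε * k) := by
  have hlog : log x ≤ x ^ ε / ε := log_le_rpow_div (by linarith) hε
  have hone : 1 ≤ x ^ ε := one_le_rpow hx hε.le
  calc (1 + log x) ^ k ≤ ((1 + 1 / ε) * x ^ ε) ^ k := by
        gcongr
        · exact add_nonneg zero_le_one (log_nonneg hx)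
        · calc 1 + log x ≤ x ^ ε + x ^ ε / ε := add_le_add hone hlog
            _ = (1 + 1 / ε) * x ^ ε := by ring
    _ = (1 + 1 / ε) ^ k * x ^ (ε * k) := by
        rw [mul_pow, rpow_mul (by linarith), rpow_natCast]

lemma one_add_abs_log_pow_le {ε s : ℝ} (hε : 0 < ε) (hs : 0 < s) (k : ℕ) :
    (1 + |log s|) ^ k ≤ (1 + 1 / ε) ^ k * (s ^ (ε * k) + s ^ (-(ε * k))) := by
  rcases le_total 1 s with h1 | h1
  · rw [abs_of_nonneg (log_nonneg h1)]
    calc _ ≤ (1 + 1 / ε) ^ k * s ^ (ε * k) := one_add_log_pow_le hε h1 k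
      _ ≤ _ := by gcongr; exact le_add_of_nonneg_right (rpow_nonneg hs.le _)
  · rw [abs_of_nonpos (log_nonpos hs.le h1), ← log_inv]
    calc _ ≤ (1 + 1 / ε) ^ k * s⁻¹ ^ (ε * k) := one_add_log_pow_le hε ((one_le_inv₀ hs).2 h1) k
      _ = (1 + 1 / ε) ^ k * s ^ (-(ε * k)) := by rw [inv_rpow hs.le, rpow_neg hs.le]
      _ ≤ _ := by gcongr; exact le_add_of_nonneg_left (rpow_nonneg hs.le _)

lemma abs_one_sub_div_le {a b : ℝ} (hb : 1 ≤ |b|) : |1 - a / b| ≤ 1 + |a| :=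
  calc |1 - a / b| ≤ |1| + |a / b| := abs_sub _ _
    _ = 1 + |a| / |b| := by rw [abs_one, abs_div]
    _ ≤ 1 + |a| := by gcongr; exact div_le_self (abs_nonneg a) hb

lemma integral_exp_neg_mul_rpow_mul_neg_log_pow_rescale {l n : ℝ} (hn : 1 < n) (k : ℕ) :
    (∫ t in Ioo (0 : ℝ) 1, exp (-(n * t)) * (t ^ (l - 1) * (-log t) ^ k)) * n ^ l / log n ^ k =
      ∫ s in Ioo (0 : ℝ) n, exp (-s) * s ^ (l - 1) * (1 - log s / log n) ^ k := by
  have hn0 : 0 < n := by linarith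
  have hlog : log n ≠ 0 := (log_pos hn).ne'
  set φ : ℝ → ℝ := fun s => exp (-s) * s ^ (l - 1) * (1 - log s / log n) ^ k
  have hφ : ∀ t ∈ Ioo (0 : ℝ) 1, φ (n * t) =
      exp (-(n * t)) * (t ^ (l - 1) * (-log t) ^ k) * (n ^ (l - 1) / log n ^ k) := by
    rintro t ⟨ht, -⟩
    have hlog_mul : 1 - log (n * t) / log n = -log t / log n := by
      rw [log_mul hn0.ne' ht.ne']
      field_simp
      ring
    simp only [φ, mul_rpow hn0.le ht.le, hlog_mul, div_pow]
    ring
  calc _ = n * ((∫ t in Ioo (0 : ℝ) 1, exp (-(n * t)) * (t ^ (l - 1) * (-log t) ^ k)) *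
          (n ^ (l - 1) / log n ^ k)) := by
        rw [rpow_sub_one hn0.ne']
        field_simp
    _ = n * ∫ t in Ioo (0 : ℝ) 1, φ (n * t) := by
        rw [← integral_mul_const, setIntegral_congr_fun measurableSet_Ioo hφ]
    _ = ∫ s in Ioo (0 : ℝ) n, φ s := by
        rw [← integral_Ioc_eq_integral_Ioo, ← integral_Ioc_eq_integral_Ioo,
          ← intervalIntegral.integral_of_le zero_le_one,
          ← intervalIntegral.integral_of_le hn0.le,
          intervalIntegral.integral_comp_mul_left φ hn0.ne', mul_zero, mul_one, smul_eq_mul,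
          mul_inv_cancel_left₀ hn0.ne']

lemma norm_exp_neg_mul_rpow_mul_one_sub_log_div_log_pow_le {l ε n s : ℝ} (hε : 0 < ε)
    (hn : 1 ≤ log n) (hs : 0 < s) (k : ℕ) :
    ‖exp (-s) * s ^ (l - 1) * (1 - log s / log n) ^ k‖ ≤
      (1 + 1 / ε) ^ k * (exp (-s) * s ^ (l + ε * k - 1) + exp (-s) * s ^ (l - ε * k - 1)) := by
  have hsplit : ∀ a, s ^ (l + a - 1) = s ^ (l - 1) * s ^ a := fun a => by
    rw [← rpow_add hs]; ring_nf
  calc _ = exp (-s) * s ^ (l - 1) * |1 - log s / log n| ^ k := by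
        simp only [norm_mul, norm_pow, norm_eq_abs, abs_of_pos (exp_pos _),
          abs_of_pos (rpow_pos_of_pos hs _)]
    _ ≤ exp (-s) * s ^ (l - 1) * (1 + |log s|) ^ k := by
        gcongr
        exact abs_one_sub_div_le (hn.trans (le_abs_self _))
    _ ≤ exp (-s) * s ^ (l - 1) * ((1 + 1 / ε) ^ k * (s ^ (ε * k) + s ^ (-(ε * k)))) := by
        gcongr
        exact one_add_abs_log_pow_le hε hs k
    _ = _ := by
        simp only [hsplit, sub_eq_add_neg l (ε * k)]
        ring

theorem tendsto_integral_exp_neg_mul_rpow_mul_one_sub_log_div_log_pow {l : ℝ} (hl : 0 < l)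
    (k : ℕ) :
    Tendsto (fun n => ∫ s in Ioo (0 : ℝ) n, exp (-s) * s ^ (l - 1) * (1 - log s / log n) ^ k)
      atTop (𝓝 (Gamma l)) := by
  set f : ℝ → ℝ → ℝ := fun n s => exp (-s) * s ^ (l - 1) * (1 - log s / log n) ^ k
  set ε : ℝ := l / (k + 1)
  have hε : 0 < ε := by positivity
  have hεk : ε * k < l := by
    rw [div_mul_eq_mul_div, div_lt_iff₀ (by positivity)]
    linarith
  have hεk0 : 0 ≤ ε * k := by positivity
  have h_eq : ∀ n, ∫ s in Ioo (0 : ℝ) n, f n s = ∫ s in Ioi (0 : ℝ), (Ioo 0 n).indicator (f n) s :=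
    fun n => by
      rw [setIntegral_indicator measurableSet_Ioo,
        inter_eq_self_of_subset_right Ioo_subset_Ioi_self]
  rw [Gamma_eq_integral hl]
  refine Tendsto.congr (fun n => (h_eq n).symm) ?_
  refine tendsto_integral_filter_of_dominated_convergence
    (fun s => (1 + 1 / ε) ^ k * (exp (-s) * s ^ (l + ε * k - 1) + exp (-s) * s ^ (l - ε * k - 1)))
    ?_ ?_ ?_ ?_
  · refine Eventually.of_forall fun n => ?_
    exact ((by fun_prop : Measurable (f n)).indicator measurableSet_Ioo).aestronglyMeasurable
  · filter_upwards [tendsto_log_atTop.eventually_ge_atTop 1] with n hn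
    filter_upwards [self_mem_ae_restrict measurableSet_Ioi] with s hs
    exact (norm_indicator_le_norm_self _ _).trans
      (norm_exp_neg_mul_rpow_mul_one_sub_log_div_log_pow_le hε hn hs k)
  · exact ((GammaIntegral_convergent (by linarith)).add
      (GammaIntegral_convergent (by linarith))).const_mul _
  · filter_upwards [self_mem_ae_restrict measurableSet_Ioi] with s hs
    have hf : Tendsto (fun n => f n s) atTop (𝓝 (exp (-s) * s ^ (l - 1) * (1 - 0) ^ k)) :=
      tendsto_const_nhds.mul
        ((tendsto_const_nhds.sub (tendsto_const_nhds.div_atTop tendsto_log_atTop)).pow k)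
    rw [sub_zero, one_pow, mul_one] at hf
    refine hf.congr' ?_
    filter_upwards [eventually_gt_atTop s] with n hn
    exact (indicator_of_mem (show s ∈ Ioo 0 n from ⟨hs, hn⟩) (f n)).symm

theorem tendsto_integral_exp_neg_mul_rpow_mul_neg_log_pow {l : ℝ} (hl : 0 < l) (k : ℕ) :
    Tendsto (fun n => (∫ t in Ioo (0 : ℝ) 1, exp (-(n * t)) * (t ^ (l - 1) * (-log t) ^ k)) *
      n ^ l / log n ^ k) atTop (𝓝 (Gamma l)) := by
  refine (tendsto_integral_exp_neg_mul_rpow_mul_one_sub_log_div_log_pow hl k).congr' ?_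
  filter_upwards [eventually_gt_atTop 1] with n hn
  exact (integral_exp_neg_mul_rpow_mul_neg_log_pow_rescale hn k).symm

theorem laplace_asymptotic (c l : ℝ) (hl : l > 0) (m : ℕ) :
    Tendsto
      (fun n : ℝ =>
        (∫ t in Ioo (0 : ℝ) 1,
            Real.exp (-(n * t)) * (c * t ^ (l - 1) * (-Real.log t) ^ (m - 1)))
          * n ^ l / (Real.log n) ^ (m - 1))
      atTop (nhds (c * Real.Gamma l)) := by
  convert (tendsto_integral_exp_neg_mul_rpow_mul_neg_log_pow hl (m - 1)).const_mul c using 2 with n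
  rw [mul_div_assoc, mul_div_assoc, ← mul_assoc, ← integral_const_mul]
  congr 2 with t
  ring
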